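/- Let J ≥ 1 and let K ⊂ X = {0,…,J}^{ℤ₋} be a subshift. There exists a strict g-function for K (that is, a continuous g-function g on X such that K is g-invariant and g(ξ) > 0 for every ξ ∈ K) if and only if K is a subshift of finite type. -/

import Mathlib

open Set Topology

def shiftX {J : ℕ} (ξ : ℕ → Fin (J+1)) : ℕ → Fin (J+1) := fun n => ξ (n+1)

def consX {J : ℕ} (a : Fin (J+1)) (ξ : ℕ → Fin (J+1)) : ℕ → Fin (J+1) :=
  fun n => match n with
  | 0 => a
  | m+1 => ξ m

def starX {J : ℕ} (j : Fin (J+1)) (ξ : ℕ → Fin (J+1)) : ℕ → Fin (J+1) :=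
  fun n => match n with
  | 0 => ξ 0 + j
  | m+1 => ξ (m+1)

/-- The set of exit points of `E`: points outside `E` whose shift lies in `E`. -/
def exitX {J : ℕ} (E : Set (ℕ → Fin (J+1))) : Set (ℕ → Fin (J+1)) :=
  {ξ | ξ ∉ E ∧ shiftX ξ ∈ E}

/-- A subshift: a nonempty, closed, proper, shift-invariant subset. -/
def IsSubshift {J : ℕ} (K : Set (ℕ → Fin (J+1))) : Prop :=
  K.Nonempty ∧ IsClosed K ∧ K ≠ Set.univ ∧ K = shiftX '' K

/-- The word `(w₁,…,w_m)` occurs in `ξ` if for some `i ≥ 0` the consecutive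
coordinates `(ξ(i+m−1),…,ξ(i))` equal `(w₁,…,w_m)`. -/
def OccursX {J : ℕ} (w : List (Fin (J+1))) (ξ : ℕ → Fin (J+1)) : Prop :=
  ∃ i : ℕ, ∀ k, k < w.length → ξ (i + k) = w.reverse.getD k 0

/-- A subshift of finite type: defined by a finite nonempty set of forbidden words. -/
def IsFiniteType {J : ℕ} (K : Set (ℕ → Fin (J+1))) : Prop :=
  ∃ F : Finset (List (Fin (J+1))), F.Nonempty ∧ K = {ξ | ∀ w ∈ F, ¬ OccursX w ξ}

/-!
If `g` is a strict `g`-function, continuity of `g` and compactness of `K` give a length `N` such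
that `g > 0` at every point whose first `N` symbols form a word of `K`. As `g` vanishes at exit
points, a point whose shift lies in `K` and whose first `N` symbols form a word of `K` lies in `K`
itself; splicing and closedness of `K` then show that `K` is cut out by its forbidden words of
length `N`.

Conversely, if `K` is cut out by forbidden words, let `g ξ` choose uniformly among the symbols
that extend `shiftX ξ` without creating a forbidden prefix (and uniformly among all symbols when
there is none). This `g` depends on finitely many coordinates only, so it is continuous.
-/

open PiNat Filter

section Cylinders

variable {E : ℕ → Type*} [∀ n, TopologicalSpace (E n)] [∀ n, DiscreteTopology (E n)]

theorem PiNat.eventually_cylinder_subset {x : ∀ n, E n} {s : Set (∀ n, E n)} (hs : s ∈ 𝓝 x) :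
    ∀ᶠ n in atTop, cylinder x n ⊆ s := by
  obtain ⟨_, ⟨y, n, rfl⟩, hx, hsub⟩ := (isTopologicalBasis_cylinders E).mem_nhds_iff.1 hs
  rw [← mem_cylinder_iff_eq.1 hx] at hsub
  exact eventually_atTop.2 ⟨n, fun m hm => (cylinder_anti x hm).trans hsub⟩

theorem IsCompact.eventually_forall_cylinder_subset {K U : Set (∀ n, E n)} (hK : IsCompact K)
    (hU : IsOpen U) (hKU : K ⊆ U) : ∀ᶠ n in atTop, ∀ x ∈ K, cylinder x n ⊆ U := by
  refine hK.induction_on (p := fun t => ∀ᶠ n in atTop, ∀ x ∈ t, cylinder x n ⊆ U) (by simp)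
    (fun s t hst ht => ht.mono fun n h x hx => h x (hst hx))
    (fun s t hs ht => (hs.and ht).mono fun n h x hx => hx.elim (h.1 x) (h.2 x)) fun x hx => ?_
  obtain ⟨n, hn⟩ := (eventually_cylinder_subset (hU.mem_nhds (hKU hx))).exists
  refine ⟨cylinder x n, mem_nhdsWithin_of_mem_nhds
    ((isOpen_cylinder E x n).mem_nhds (self_mem_cylinder x n)),
    eventually_atTop.2 ⟨n, fun m hm y hy => ?_⟩⟩
  rw [mem_cylinder_iff_eq] at hy
  exact (cylinder_anti y hm).trans (hy ▸ hn)

theorem PiNat.mem_closure_of_forall_cylinder_inter_nonempty {x : ∀ n, E n} {s : Set (∀ n, E n)}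
    (h : ∀ n, (cylinder x n ∩ s).Nonempty) : x ∈ closure s := by
  refine (isTopologicalBasis_cylinders E).mem_closure_iff.2 ?_
  rintro _ ⟨y, n, rfl⟩ hx
  rw [← mem_cylinder_iff_eq.1 hx]
  exact h n

theorem PiNat.continuous_of_forall_mem_cylinder {Y : Type*} [TopologicalSpace Y]
    {f : (∀ n, E n) → Y} (N : ℕ) (hf : ∀ x y, y ∈ cylinder x N → f y = f x) : Continuous f :=
  ((IsLocallyConstant.iff_exists_open f).2 fun x =>
    ⟨cylinder x N, isOpen_cylinder E x N, self_mem_cylinder x N, hf x⟩).continuous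

end Cylinders

theorem PiNat.res_length_eq_iff {α : Type*} (y : ℕ → α) (w : List α) (d : α) :
    res y w.length = w ↔ ∀ k < w.length, y k = w.reverse.getD k d := by
  induction w with
  | nil => simp
  | cons a w ih =>
    simp only [List.length_cons, res_succ, List.cons.injEq, ih, List.reverse_cons,
      Nat.forall_lt_succ_right]
    have hlast : (w.reverse ++ [a]).getD w.length d = a := by
      rw [List.getD_append_right _ _ _ _ (by simp)]
      simp
    have hinit : ∀ k < w.length, (w.reverse ++ [a]).getD k d = w.reverse.getD k d :=
      fun k hk => List.getD_append _ _ _ _ (by simpa using hk)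
    rw [hlast, and_comm]
    exact and_congr_left fun _ => forall₂_congr fun k hk => by rw [hinit k hk]

section Shift

variable {J : ℕ}

theorem shiftX_iterate_apply (ξ : ℕ → Fin (J+1)) (i n : ℕ) : (shiftX^[i] ξ) n = ξ (n + i) := by
  induction i generalizing ξ with
  | zero => rfl
  | succ i ih => rw [Function.iterate_succ_apply, ih]; rfl

-- `res x n` lists `x (n - 1), …, x 0`, the orientation in which `OccursX` reads words.
theorem occursX_iff (w : List (Fin (J+1))) (ξ : ℕ → Fin (J+1)) :
    OccursX w ξ ↔ ∃ i, res (shiftX^[i] ξ) w.length = w := by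
  simp only [OccursX, res_length_eq_iff _ w 0, shiftX_iterate_apply, add_comm]

theorem setOf_forall_not_occursX (F : Finset (List (Fin (J+1)))) :
    {ξ | ∀ w ∈ F, ¬ OccursX w ξ} = {ξ | ∀ i, ∀ w ∈ F, res (shiftX^[i] ξ) w.length ≠ w} := by
  ext ξ
  simp only [mem_ofPred_eq, occursX_iff, not_exists]
  exact ⟨fun h i w hw => h w hw i, fun h w hw i => h i w hw⟩

theorem forall_iterate_shiftX_iff (P : (ℕ → Fin (J+1)) → Prop) (ξ : ℕ → Fin (J+1)) :
    (∀ i, P (shiftX^[i] ξ)) ↔ P ξ ∧ ∀ i, P (shiftX^[i] (shiftX ξ)) :=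
  ⟨fun h => ⟨h 0, fun i => h (i + 1)⟩, fun h i => i.casesOn h.1 h.2⟩

theorem shiftX_consX (a : Fin (J+1)) (ξ : ℕ → Fin (J+1)) : shiftX (consX a ξ) = ξ := rfl

theorem consX_head_shiftX (η : ℕ → Fin (J+1)) : consX (η 0) (shiftX η) = η := by
  funext n
  cases n <;> rfl

theorem consX_shiftX_mem_cylinder {ξ η : ℕ → Fin (J+1)} {n : ℕ} (a : Fin (J+1))
    (h : η ∈ cylinder ξ n) : consX a (shiftX η) ∈ cylinder (consX a (shiftX ξ)) n
  | 0, _ => rfl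
  | k + 1, hk => h (k + 1) hk

theorem iterate_shiftX_mem_cylinder {ξ ζ : ℕ → Fin (J+1)} {i N : ℕ}
    (h : ζ ∈ cylinder ξ (i + N)) : shiftX^[i] ζ ∈ cylinder (shiftX^[i] ξ) N := fun k hk => by
  simp only [shiftX_iterate_apply]
  exact h _ (by omega)

theorem exists_mem_cylinder_iterate_shiftX_eq {ξ η : ℕ → Fin (J+1)} {M N : ℕ}
    (h : shiftX^[M] ξ ∈ cylinder η N) : ∃ ζ ∈ cylinder ξ (M + N), shiftX^[M] ζ = η := by
  refine ⟨fun m => if m < M then ξ m else η (m - M), fun k hk => ?_, funext fun k => ?_⟩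
  · dsimp only
    split_ifs with hkM
    · rfl
    · have := h (k - M) (by omega)
      rw [shiftX_iterate_apply, Nat.sub_add_cancel (not_lt.1 hkM)] at this
      exact this.symm
  · simp [shiftX_iterate_apply]

theorem mem_of_iterate_shiftX_mem {K : Set (ℕ → Fin (J+1))} {Q : (ℕ → Fin (J+1)) → Prop}
    (hlift : ∀ ξ, shiftX ξ ∈ K → Q ξ → ξ ∈ K) :
    ∀ (M : ℕ) (ζ : ℕ → Fin (J+1)), shiftX^[M] ζ ∈ K → (∀ i < M, Q (shiftX^[i] ζ)) → ζ ∈ K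
  | 0, _, h, _ => h
  | M + 1, ζ, h, hQ => hlift ζ
      (mem_of_iterate_shiftX_mem hlift M (shiftX ζ) h fun i hi => hQ (i + 1) (by omega))
      (hQ 0 M.succ_pos)

end Shift

section UniformG

variable {J : ℕ} (P : (ℕ → Fin (J+1)) → Prop) [DecidablePred P]

noncomputable def extensionCount (ξ : ℕ → Fin (J+1)) : ℕ :=
  (Finset.univ.filter fun a => P (consX a ξ)).card

noncomputable def uniformG (η : ℕ → Fin (J+1)) : ℝ :=
  if P η then (extensionCount P (shiftX η) : ℝ)⁻¹
  else if extensionCount P (shiftX η) = 0 then ((J : ℝ) + 1)⁻¹ else 0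

variable {P}

theorem extensionCount_shiftX_ne_zero {η : ℕ → Fin (J+1)} (h : ∃ a, P (consX a (shiftX η))) :
    extensionCount P (shiftX η) ≠ 0 := by
  obtain ⟨a, ha⟩ := h
  exact Finset.card_ne_zero_of_mem (Finset.mem_filter.2 ⟨Finset.mem_univ a, ha⟩)

theorem uniformG_pos {η : ℕ → Fin (J+1)} (h : P η) : 0 < uniformG P η := by
  have hc := extensionCount_shiftX_ne_zero ⟨η 0, (consX_head_shiftX η).symm ▸ h⟩
  rw [uniformG, if_pos h]
  positivity

theorem uniformG_eq_zero {η : ℕ → Fin (J+1)} (h : ¬ P η) (hext : ∃ a, P (consX a (shiftX η))) :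
    uniformG P η = 0 := by
  rw [uniformG, if_neg h, if_neg (extensionCount_shiftX_ne_zero hext)]

theorem uniformG_nonneg (η : ℕ → Fin (J+1)) : 0 ≤ uniformG P η := by
  unfold uniformG
  split_ifs <;> positivity

theorem sum_uniformG_consX (ξ : ℕ → Fin (J+1)) : ∑ a, uniformG P (consX a ξ) = 1 := by
  simp only [uniformG, shiftX_consX]
  by_cases hc : extensionCount P ξ = 0
  · have hnone : ∀ a, ¬ P (consX a ξ) := by
      simpa [extensionCount, Finset.filter_eq_empty_iff] using hc
    simp only [hnone, hc, if_false, if_true, Finset.sum_const, Finset.card_univ,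
      Fintype.card_fin, nsmul_eq_mul]
    push_cast
    exact mul_inv_cancel₀ (by positivity)
  · rw [Finset.sum_ite, Finset.sum_const, ← extensionCount]
    simp [hc]

theorem continuous_uniformG (N : ℕ) (hP : ∀ ξ η, η ∈ cylinder ξ N → (P η ↔ P ξ)) :
    Continuous (uniformG P) := by
  refine continuous_of_forall_mem_cylinder N fun ξ η h => ?_
  have hc : extensionCount P (shiftX η) = extensionCount P (shiftX ξ) := by
    unfold extensionCount
    congr 1
    exact Finset.filter_congr fun a _ => hP _ _ (consX_shiftX_mem_cylinder a h)
  simp only [uniformG, hc, hP ξ η h]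

end UniformG

section FiniteType

variable {J : ℕ} {K : Set (ℕ → Fin (J+1))}

theorem isFiniteType_of_eq_setOf_res_mem (N : ℕ) (S : Set (List (Fin (J+1))))
    (hS : ∃ w, w.length = N ∧ w ∉ S) (hK : K = {ξ | ∀ i, res (shiftX^[i] ξ) N ∈ S}) :
    IsFiniteType K := by
  let F := ((List.finite_length_eq (Fin (J+1)) N).subset
    (t := {w | w.length = N ∧ w ∉ S}) fun _ hw => hw.1).toFinset
  refine ⟨F, hS.imp fun w hw => by simpa [F] using hw, ?_⟩
  rw [hK, setOf_forall_not_occursX]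
  ext ξ
  simp only [mem_ofPred_eq, Set.Finite.mem_toFinset, F]
  refine forall_congr' fun i => ⟨fun h w ⟨hlen, hw⟩ heq => ?_, fun h => ?_⟩
  · subst hlen
    exact hw (heq ▸ h)
  · by_contra hw
    exact h _ ⟨res_length _ N, hw⟩ (by rw [res_length])

theorem eq_setOf_forall_res_iterate_shiftX_mem {N : ℕ} (hKcl : IsClosed K)
    (hmaps : MapsTo shiftX K K) (hlift : ∀ ξ, shiftX ξ ∈ K → res ξ N ∈ (res · N) '' K → ξ ∈ K) :
    K = {ξ | ∀ i, res (shiftX^[i] ξ) N ∈ (res · N) '' K} := by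
  refine Subset.antisymm (fun ξ hξ i => mem_image_of_mem _ (hmaps.iterate i hξ)) fun ξ hξ => ?_
  rw [← hKcl.closure_eq]
  refine mem_closure_of_forall_cylinder_inter_nonempty fun M => ?_
  obtain ⟨η, hη, hηξ⟩ := hξ M
  obtain ⟨ζ, hζξ, rfl⟩ := exists_mem_cylinder_iterate_shiftX_eq (M := M) (N := N)
    (ξ := ξ) (η := η) fun k hk => (res_eq_res.1 hηξ hk).symm
  refine ⟨ζ, cylinder_anti ξ (Nat.le_add_right M N) hζξ,
    mem_of_iterate_shiftX_mem hlift M ζ hη fun i hi => ?_⟩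
  have hcyl := iterate_shiftX_mem_cylinder (cylinder_anti ξ (by omega : i + N ≤ M + N) hζξ)
  rw [res_eq_res.2 fun m hm => hcyl m hm]
  exact hξ i

theorem isFiniteType_of_strict_gFunction (hK : IsSubshift K) {g : (ℕ → Fin (J+1)) → ℝ}
    (hgc : Continuous g) (hgexit : ∀ ξ ∈ exitX K, g ξ = 0) (hgpos : ∀ ξ ∈ K, 0 < g ξ) :
    IsFiniteType K := by
  obtain ⟨-, hKcl, hKne, hKs⟩ := hK
  obtain ⟨ξ₀, hξ₀⟩ := (ne_univ_iff_exists_notMem K).1 hKne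
  obtain ⟨N, hpos, hξ₀N⟩ := ((hKcl.isCompact.eventually_forall_cylinder_subset
    (isOpen_lt continuous_const hgc) hgpos).and
    (eventually_cylinder_subset (hKcl.isOpen_compl.mem_nhds hξ₀))).exists
  have hlift : ∀ ξ, shiftX ξ ∈ K → res ξ N ∈ (res · N) '' K → ξ ∈ K := by
    rintro ξ hsξ ⟨η, hη, hres⟩
    by_contra hξ
    exact (hpos η hη fun k hk => (res_eq_res.1 hres hk).symm).ne' (hgexit ξ ⟨hξ, hsξ⟩)
  refine isFiniteType_of_eq_setOf_res_mem N _ ⟨res ξ₀ N, res_length _ _, ?_⟩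
    (eq_setOf_forall_res_iterate_shiftX_mem hKcl
      ((mapsTo_image shiftX K).mono_right hKs.symm.subset) hlift)
  rintro ⟨η, hη, hres⟩
  exact hξ₀N (fun k hk => res_eq_res.1 hres hk) hη

theorem exists_strict_gFunction_of_isFiniteType (hKs : K = shiftX '' K) (hK : IsFiniteType K) :
    ∃ g : (ℕ → Fin (J+1)) → ℝ, Continuous g ∧ (∀ ξ, 0 ≤ g ξ) ∧
        (∀ ξ, ∑ a : Fin (J+1), g (consX a ξ) = 1) ∧
        (∀ ξ ∈ exitX K, g ξ = 0) ∧
        (∀ ξ ∈ K, 0 < g ξ) := by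
  obtain ⟨F, -, hFK⟩ := hK
  let P : (ℕ → Fin (J+1)) → Prop := fun ξ => ∀ w ∈ F, res ξ w.length ≠ w
  have hKP : ∀ ξ, ξ ∈ K ↔ ∀ i, P (shiftX^[i] ξ) := by
    rw [hFK, setOf_forall_not_occursX]
    exact fun _ => Iff.rfl
  have hPloc : ∀ ξ η, η ∈ cylinder ξ (F.sup List.length) → (P η ↔ P ξ) := fun ξ η h =>
    forall₂_congr fun w hw => by
      rw [res_eq_res.2 fun m hm => h m (hm.trans_le (Finset.le_sup hw))]
  refine ⟨uniformG P, continuous_uniformG _ hPloc, uniformG_nonneg, sum_uniformG_consX,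
    fun η ⟨hη, hsη⟩ => uniformG_eq_zero ?_ ?_, fun η hη => uniformG_pos ((hKP η).1 hη 0)⟩
  · exact fun hPη => hη ((hKP η).2 ((forall_iterate_shiftX_iff P η).2 ⟨hPη, (hKP _).1 hsη⟩))
  · obtain ⟨ζ, hζ, hζη⟩ := (hKs ▸ hsη : shiftX η ∈ shiftX '' K)
    refine ⟨ζ 0, ?_⟩
    rw [← hζη, consX_head_shiftX]
    exact (hKP ζ).1 hζ 0

end FiniteType

theorem subshift_has_strict_gFunction_iff_finiteType_general {J : ℕ}
    (K : Set (ℕ → Fin (J+1))) (hK : IsSubshift K) :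
    (∃ g : (ℕ → Fin (J+1)) → ℝ, Continuous g ∧ (∀ ξ, 0 ≤ g ξ) ∧
        (∀ ξ, ∑ a : Fin (J+1), g (consX a ξ) = 1) ∧
        (∀ ξ ∈ exitX K, g ξ = 0) ∧
        (∀ ξ ∈ K, 0 < g ξ)) ↔
      IsFiniteType K :=
  ⟨fun ⟨_, hgc, _, _, hgexit, hgpos⟩ => isFiniteType_of_strict_gFunction hK hgc hgexit hgpos,
    exists_strict_gFunction_of_isFiniteType hK.2.2.2⟩

/-- A subshift has a strict `g`-function (a continuous `g`-function,
positive on `K`, for which `K` is invariant) iff it is of finite type. -/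
theorem subshift_has_strict_gFunction_iff_finiteType {J : ℕ} (hJ : 1 ≤ J)
    (K : Set (ℕ → Fin (J+1))) (hK : IsSubshift K) :
    (∃ g : (ℕ → Fin (J+1)) → ℝ, Continuous g ∧ (∀ ξ, 0 ≤ g ξ) ∧
        (∀ ξ, ∑ a : Fin (J+1), g (consX a ξ) = 1) ∧
        (∀ ξ ∈ exitX K, g ξ = 0) ∧
        (∀ ξ ∈ K, 0 < g ξ)) ↔
      IsFiniteType K :=
  subshift_has_strict_gFunction_iff_finiteType_general K hK
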